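/- arXiv:1107.1182 — 5 statements merged into one kernel-verified Lean document; each statement's English description precedes it below -/
import Mathlib

section
/- For every integer n ≥ 2 there exists a constant c > 0 (depending only on n) such that every number field K of degree n over ℚ contains a nonzero algebraic integer α ∈ 𝒪_K with trace Tr_{K/ℚ}(α) = 0 such that for every field embedding σ : K → ℂ one has |σ(α)| ≤ c · |d_K|^(1/(2(n−1))), where d_K is the discriminant of K. -/
/-!
Apply Minkowski's theorem to a convex body that is small at one infinite place `w₀` and has
radius `B ≍ |d_K| ^ (1 / (2 (n - 1)))` at all the others (at a complex `w₀`, a box with real part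
`< 1` and imaginary part `< B`); the volume works out because `B ^ (n - 1) ≍ √|d_K|`. This gives
`a ∈ 𝓞_K`, all of whose conjugates are `O(B)`, that is not a rational integer. Then
`α = n a - Tr(a)` is an algebraic integer of trace zero, nonzero because `a ∉ ℚ`, with
`|σ α| ≤ 2 n max_φ |φ a|`.
-/

open NumberField NumberField.InfinitePlace NumberField.mixedEmbedding Module
open scoped NNReal ENNReal

theorem NNReal.rpow_one_div_two_mul_pow (x : ℝ≥0) {m : ℕ} (hm : m ≠ 0) :
    (x ^ (1 / (2 * (m : ℝ)))) ^ m = NNReal.sqrt x := by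
  rw [← NNReal.rpow_natCast, ← NNReal.rpow_mul, NNReal.sqrt_eq_rpow]
  field_simp

section Trace
variable {F L : Type*} [Field F] [Field L] [Algebra F L] [FiniteDimensional F L]

theorem trace_finrank_smul_sub_algebraMap_trace (x : L) :
    Algebra.trace F L (finrank F L • x - algebraMap F L (Algebra.trace F L x)) = 0 := by
  rw [map_sub, map_nsmul, Algebra.trace_algebraMap, sub_self]

theorem mem_range_algebraMap_of_finrank_smul_sub_algebraMap_trace_eq_zero [CharZero F] {x : L}
    (h : finrank F L • x - algebraMap F L (Algebra.trace F L x) = 0) :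
    x ∈ Set.range (algebraMap F L) := by
  refine ⟨Algebra.trace F L x / finrank F L, ?_⟩
  have := charZero_of_injective_algebraMap (algebraMap F L).injective
  have : (finrank F L : L) ≠ 0 := Nat.cast_ne_zero.mpr finrank_pos.ne'
  rw [map_div₀, map_natCast, ← sub_eq_zero.mp h, nsmul_eq_mul, mul_div_cancel_left₀ _ this]

end Trace

section NumberField

variable {K : Type*} [Field K] [NumberField K]

theorem minkowskiBound_one_le :
    minkowskiBound K ↑1 ≤ 2 ^ finrank ℚ K * (NNReal.sqrt ‖discr K‖₊ : ℝ≥0∞) := by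
  rw [minkowskiBound, volume_fundamentalDomain_fractionalIdealLatticeBasis, Units.val_one,
    FractionalIdeal.absNorm_one, Rat.cast_one, ENNReal.ofReal_one, one_mul,
    volume_fundamentalDomain_latticeBasis, mixedEmbedding.finrank, mul_comm]
  gcongr
  exact mul_le_of_le_one_left zero_le (pow_le_one₀ zero_le (ENNReal.inv_le_one.mpr one_le_two))

theorem one_le_abs_re_of_mem_range_algebraMap {a : 𝓞 K} (ha : a ≠ 0)
    (hq : (a : K) ∈ Set.range (algebraMap ℚ K)) (φ : K →+* ℂ) : 1 ≤ |(φ a).re| := by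
  obtain ⟨q, hq⟩ := hq
  have : IsIntegral ℤ q := by
    rw [← isIntegral_algebraMap_iff (algebraMap ℚ K).injective, hq]
    exact a.isIntegral_coe
  obtain ⟨z, rfl⟩ := IsIntegrallyClosed.isIntegral_iff.mp this
  have hz : z ≠ 0 := by
    rintro rfl
    exact ha (RingOfIntegers.coe_eq_zero_iff.mp (by simp [← hq]))
  rw [← hq, eq_intCast, map_intCast, map_intCast, Complex.intCast_re]
  exact_mod_cast Int.one_le_abs hz

open scoped Classical in
theorem prod_ite_pow_mult (w₀ : InfinitePlace K) (b B : ℝ≥0) :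
    ∏ w, (if w = w₀ then b else B) ^ mult w = b ^ mult w₀ * B ^ (finrank ℚ K - mult w₀) := by
  rw [← Finset.prod_erase_mul _ _ (Finset.mem_univ w₀), if_pos rfl, mul_comm,
    Finset.prod_congr rfl fun w hw => by rw [if_neg (Finset.ne_of_mem_erase hw)],
    Finset.prod_pow_eq_pow_sum, ← sum_mult_eq, ← Finset.sum_erase_add _ _ (Finset.mem_univ w₀),
    Nat.add_sub_cancel]

theorem exists_ne_zero_infinitePlace_lt_of_isReal {w₀ : InfinitePlace K} (hw₀ : IsReal w₀)
    {B : ℝ≥0} (hB : 2 * minkowskiBound K ↑1 < B ^ (finrank ℚ K - 1)) :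
    ∃ a : 𝓞 K, a ≠ 0 ∧ (∀ w ≠ w₀, w a < B) ∧ w₀ a < 1 := by
  classical
  have hvol : minkowskiBound K ↑1 <
      MeasureTheory.volume (convexBodyLT K fun w ↦ if w = w₀ then 2⁻¹ else B) := by
    rw [convexBodyLT_volume, prod_ite_pow_mult, mult_isReal ⟨w₀, hw₀⟩, pow_one]
    refine (le_mul_of_one_le_left zero_le (mod_cast one_le_convexBodyLTFactor K)).trans_lt' ?_
    push_cast
    rwa [← ENNReal.div_eq_inv_mul, ENNReal.lt_div_iff_mul_lt (by norm_num) (by norm_num),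
      mul_comm]
  obtain ⟨a, ha, hlt⟩ := exists_ne_zero_mem_ringOfIntegers_lt K hvol
  refine ⟨a, ha, fun w hw ↦ ?_, ?_⟩
  · simpa [hw] using hlt w
  · simpa using (hlt w₀).trans (by norm_num)

theorem exists_ne_zero_infinitePlace_lt_of_isComplex {w₀ : InfinitePlace K} (hw₀ : IsComplex w₀)
    {B : ℝ≥0} (hB : minkowskiBound K ↑1 < B ^ (finrank ℚ K - 1)) :
    ∃ a : 𝓞 K, a ≠ 0 ∧ (∀ w ≠ w₀, w a < B) ∧
      |(w₀.embedding a).re| < 1 ∧ |(w₀.embedding a).im| < B := by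
  classical
  have hvol : minkowskiBound K ↑1 <
      MeasureTheory.volume
        (convexBodyLT' K (fun w ↦ if w = w₀ then NNReal.sqrt B else B) ⟨w₀, hw₀⟩) := by
    rw [convexBodyLT'_volume, prod_ite_pow_mult, mult_isComplex ⟨w₀, hw₀⟩, NNReal.sq_sqrt,
      ← pow_succ']
    refine (le_mul_of_one_le_left zero_le (mod_cast one_le_convexBodyLT'Factor K)).trans_lt' ?_
    have : mult w₀ ≤ finrank ℚ K :=
      sum_mult_eq (K := K) ▸ Finset.single_le_sum (fun _ _ ↦ zero_le) (Finset.mem_univ w₀)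
    rw [mult_isComplex ⟨w₀, hw₀⟩] at this
    rwa [show finrank ℚ K - 2 + 1 = finrank ℚ K - 1 by omega, ENNReal.coe_pow]
  obtain ⟨a, ha, hlt, hre, him⟩ := exists_ne_zero_mem_ringOfIntegers_lt' K ⟨w₀, hw₀⟩ hvol
  refine ⟨a, ha, fun w hw ↦ by simpa [hw] using hlt w hw, hre, by simpa using him⟩

theorem exists_notMem_range_algebraMap_infinitePlace_lt {B : ℝ≥0}
    (hB : 2 * minkowskiBound K ↑1 < B ^ (finrank ℚ K - 1)) :
    ∃ a : 𝓞 K, (a : K) ∉ Set.range (algebraMap ℚ K) ∧ ∀ w : InfinitePlace K, w a < 1 + B := by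
  -- A nonzero rational integer has real part of absolute value at least `1` under every
  -- embedding, so being small at the single place `w₀` keeps `a` out of `ℚ`.
  obtain ⟨w₀⟩ := (inferInstance : Nonempty (InfinitePlace K))
  rcases w₀.isReal_or_isComplex with hw₀ | hw₀
  · obtain ⟨a, ha, hlt, hlt₀⟩ := exists_ne_zero_infinitePlace_lt_of_isReal hw₀ hB
    refine ⟨a, fun hq ↦ ?_, fun w ↦ ?_⟩
    · have := one_le_abs_re_of_mem_range_algebraMap ha hq w₀.embedding
      linarith [Complex.abs_re_le_norm (w₀.embedding a), norm_embedding_eq w₀ a]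
    · by_cases hw : w = w₀
      · linarith [hw ▸ hlt₀, B.2]
      · linarith [hlt w hw]
  · have hB' : minkowskiBound K ↑1 < B ^ (finrank ℚ K - 1) :=
      lt_of_le_of_lt (le_mul_of_one_le_left zero_le one_le_two) hB
    obtain ⟨a, ha, hlt, hre, him⟩ := exists_ne_zero_infinitePlace_lt_of_isComplex hw₀ hB'
    refine ⟨a, fun hq ↦ ?_, fun w ↦ ?_⟩
    · linarith [one_le_abs_re_of_mem_range_algebraMap ha hq w₀.embedding]
    · by_cases hw : w = w₀
      · rw [hw, ← norm_embedding_eq]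
        linarith [Complex.norm_le_abs_re_add_abs_im (w₀.embedding a)]
      · linarith [hlt w hw]

theorem two_mul_minkowskiBound_lt (hn : 2 ≤ finrank ℚ K) :
    2 * minkowskiBound K ↑1 < ((2 ^ (finrank ℚ K + 2) *
      ‖discr K‖₊ ^ (1 / (2 * ((finrank ℚ K : ℝ) - 1))) : ℝ≥0) : ℝ≥0∞) ^ (finrank ℚ K - 1) := by
  set n := finrank ℚ K
  have hd : 0 < NNReal.sqrt ‖discr K‖₊ := by simpa using discr_ne_zero K
  have h2 : (2 : ℝ≥0) ^ (n + 1) < (2 ^ (n + 2)) ^ (n - 1) := by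
    rw [← pow_mul]
    exact pow_lt_pow_right₀ one_lt_two
      ((n + 1).lt_succ_self.trans_le (Nat.le_mul_of_pos_right _ (by omega)))
  calc 2 * minkowskiBound K ↑1 ≤ 2 * (2 ^ n * (NNReal.sqrt ‖discr K‖₊ : ℝ≥0∞)) := by
        gcongr; exact minkowskiBound_one_le
    _ = ((2 ^ (n + 1) * NNReal.sqrt ‖discr K‖₊ : ℝ≥0) : ℝ≥0∞) := by push_cast; ring
    _ < _ := by
        rw [show (n : ℝ) - 1 = (n - 1 : ℕ) by rw [Nat.cast_sub (by omega), Nat.cast_one],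
          ← ENNReal.coe_pow, ENNReal.coe_lt_coe, mul_pow,
          NNReal.rpow_one_div_two_mul_pow _ (by omega : n - 1 ≠ 0)]
        gcongr

theorem norm_finrank_smul_sub_algebraMap_trace_le {x : K} {M : ℝ}
    (hM : ∀ φ : K →+* ℂ, ‖φ x‖ ≤ M) (σ : K →+* ℂ) :
    ‖σ (finrank ℚ K • x - algebraMap ℚ K (Algebra.trace ℚ K x))‖ ≤ 2 * finrank ℚ K * M := by
  have htrace : σ (algebraMap ℚ K (Algebra.trace ℚ K x)) = ∑ φ : K →ₐ[ℚ] ℂ, φ x := by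
    rw [← trace_eq_sum_embeddings, ← RingHom.comp_apply,
      Subsingleton.elim (σ.comp _) (algebraMap ℚ ℂ)]
  have hsum : ‖∑ φ : K →ₐ[ℚ] ℂ, φ x‖ ≤ finrank ℚ K * M := by
    calc ‖∑ φ : K →ₐ[ℚ] ℂ, φ x‖ ≤ ∑ φ : K →ₐ[ℚ] ℂ, ‖φ x‖ := norm_sum_le _ _
      _ ≤ ∑ _φ : K →ₐ[ℚ] ℂ, M := Finset.sum_le_sum fun φ _ ↦ hM φ
      _ = finrank ℚ K * M := by simp [AlgHom.card]
  calc ‖σ (finrank ℚ K • x - algebraMap ℚ K (Algebra.trace ℚ K x))‖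
      ≤ finrank ℚ K * ‖σ x‖ + ‖∑ φ : K →ₐ[ℚ] ℂ, φ x‖ := by
        rw [map_sub, map_nsmul, htrace, nsmul_eq_mul]
        refine (norm_sub_le _ _).trans_eq ?_
        rw [norm_mul, Complex.norm_natCast]
    _ ≤ finrank ℚ K * M + finrank ℚ K * M := by gcongr; exact hM σ
    _ = 2 * finrank ℚ K * M := by ring

theorem RingOfIntegers.coe_finrank_smul_sub_algebraMap_trace (a : 𝓞 K) :
    ((finrank ℚ K • a - algebraMap ℤ (𝓞 K) (Algebra.trace ℤ (𝓞 K) a) : 𝓞 K) : K) =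
      finrank ℚ K • (a : K) - algebraMap ℚ K (Algebra.trace ℚ K a) := by
  simp [← Algebra.coe_trace_int]

theorem exists_notMem_range_algebraMap_norm_le (hn : 2 ≤ finrank ℚ K) :
    ∃ a : 𝓞 K, (a : K) ∉ Set.range (algebraMap ℚ K) ∧ ∀ φ : K →+* ℂ,
      ‖φ a‖ ≤ 2 ^ (finrank ℚ K + 3) *
        (|discr K| : ℝ) ^ (1 / (2 * ((finrank ℚ K : ℝ) - 1))) := by
  obtain ⟨a, ha, hlt⟩ :=
    exists_notMem_range_algebraMap_infinitePlace_lt (two_mul_minkowskiBound_lt hn)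
  refine ⟨a, ha, fun φ ↦ ?_⟩
  set D : ℝ := (|discr K| : ℝ) ^ (1 / (2 * ((finrank ℚ K : ℝ) - 1)))
  have hD : ((‖discr K‖₊ ^ (1 / (2 * ((finrank ℚ K : ℝ) - 1))) : ℝ≥0) : ℝ) = D := by
    rw [NNReal.coe_rpow, coe_nnnorm, Int.norm_eq_abs]
  have hn' : (2 : ℝ) ≤ finrank ℚ K := by exact_mod_cast hn
  have hD1 : 1 ≤ D := Real.one_le_rpow (by exact_mod_cast Int.one_le_abs (discr_ne_zero K))
    (div_nonneg zero_le_one (by linarith))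
  calc ‖φ a‖ = InfinitePlace.mk φ a := (apply φ a).symm
    _ ≤ 1 + 2 ^ (finrank ℚ K + 2) * D := by
      have := (hlt (InfinitePlace.mk φ)).le
      rwa [NNReal.coe_mul, NNReal.coe_pow, NNReal.coe_ofNat, hD] at this
    _ ≤ 2 ^ (finrank ℚ K + 3) * D := by
      rw [pow_succ _ (finrank ℚ K + 2)]
      nlinarith [one_le_pow₀ (M₀ := ℝ) one_le_two (n := finrank ℚ K + 2)]

end NumberField

/-- For every integer `n ≥ 2` there is a constant `c > 0` (depending only on `n`) such that
every number field `K` of degree `n` over `ℚ` contains a nonzero algebraic integer `α` of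
trace zero with `|σ(α)| ≤ c · |d_K|^(1/(2(n−1)))` for every embedding `σ : K → ℂ`. -/
theorem exists_small_trace_zero_integer (n : ℕ) (hn : 2 ≤ n) :
    ∃ c : ℝ, 0 < c ∧
      ∀ (K : Type) [Field K] [NumberField K], Module.finrank ℚ K = n →
        ∃ α : NumberField.RingOfIntegers K, α ≠ 0 ∧
          Algebra.trace ℚ K (α : K) = 0 ∧
          ∀ σ : K →+* ℂ, ‖σ (α : K)‖ ≤
            c * (|NumberField.discr K| : ℝ) ^ (1 / (2 * ((n : ℝ) - 1))) := by
  refine ⟨n * 2 ^ (n + 4), by positivity, fun K _ _ hK ↦ ?_⟩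
  subst hK
  obtain ⟨a, ha, hbound⟩ := exists_notMem_range_algebraMap_norm_le hn
  have hcoe := RingOfIntegers.coe_finrank_smul_sub_algebraMap_trace a
  refine ⟨finrank ℚ K • a - algebraMap ℤ (𝓞 K) (Algebra.trace ℤ (𝓞 K) a), fun h ↦ ha ?_, ?_,
    fun σ ↦ ?_⟩
  · refine mem_range_algebraMap_of_finrank_smul_sub_algebraMap_trace_eq_zero ?_
    rw [← hcoe, h]
    rfl
  · rw [hcoe, trace_finrank_smul_sub_algebraMap_trace]
  · rw [hcoe]
    refine (norm_finrank_smul_sub_algebraMap_trace_le hbound σ).trans_eq ?_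
    ring
end

section
/- Let F be a field of characteristic zero and n ≥ 2 an integer. The subalgebra of the polynomial ring F[x_1, …, x_n] consisting of all polynomials invariant under every even permutation of the variables x_1, …, x_n is equal to the F-subalgebra generated by the elementary symmetric polynomials e_1, …, e_n together with the Vandermonde polynomial Δ = ∏_{1 ≤ i < j ≤ n} (x_i − x_j). -/
/-!
Let `τ` be a transposition. For an `Aₙ`-invariant `p`, the polynomial `p + τ p` is symmetric
and `p - τ p` is alternating. The substitution `xᵢ ↦ xⱼ` is unchanged by composing with the
transposition `(i j)`, so it sends an alternating polynomial to its own negative, that is to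
`0`; hence an alternating polynomial is divisible by each of the pairwise non-associated primes
`xᵢ - xⱼ`, so by their product `Δ`, and the quotient is symmetric. Symmetric polynomials are
polynomials in `e₁, …, eₙ`, and `2 p = (p + τ p) + (p - τ p)`.
-/

open MvPolynomial Equiv

namespace MvPolynomial

variable {σ R : Type*} [CommRing R]

section XSubX

variable [DecidableEq σ]

theorem X_sub_X_dvd_iff_rename_update_eq_zero {i j : σ} {p : MvPolynomial σ R} :
    X i - X j ∣ p ↔ rename (Function.update id i j) p = 0 := by
  set I := Ideal.span {(X i - X j : MvPolynomial σ R)}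
  have hmk : (Ideal.Quotient.mkₐ R I).comp (rename (Function.update id i j)) =
      Ideal.Quotient.mkₐ R I := by
    refine algHom_ext fun k => ?_
    rcases eq_or_ne k i with rfl | hk
    · simpa [Ideal.Quotient.eq, I, Ideal.mem_span_singleton] using
        dvd_sub_comm.mp (dvd_refl (X k - X j : MvPolynomial σ R))
    · simp [hk]
  constructor
  · rintro ⟨q, rfl⟩
    simp [Function.update_apply]
  · intro hp
    have := congrArg (· p) hmk
    simp only [AlgHom.comp_apply, hp, map_zero, Ideal.Quotient.mkₐ_eq_mk] at this
    exact Ideal.mem_span_singleton.mp (Ideal.Quotient.eq_zero_iff_mem.mp this.symm)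

theorem prime_X_sub_X [IsDomain R] {i j : σ} (hij : i ≠ j) :
    Prime (X i - X j : MvPolynomial σ R) := by
  have hker : Ideal.span {(X i - X j : MvPolynomial σ R)} =
      RingHom.ker (rename (R := R) (Function.update id i j)) := by
    ext p
    rw [Ideal.mem_span_singleton, RingHom.mem_ker, X_sub_X_dvd_iff_rename_update_eq_zero]
  rw [← Ideal.span_singleton_prime (sub_ne_zero.mpr (X_injective.ne hij)), hker]
  exact RingHom.ker_isPrime _

theorem mem_of_X_sub_X_dvd_X_sub_X [Nontrivial R] {i j k l : σ} (hkl : k ≠ l)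
    (h : (X i - X j : MvPolynomial σ R) ∣ X k - X l) : k = i ∨ k = j := by
  by_contra! hk
  obtain ⟨q, hq⟩ := h
  have := congrArg (eval (Pi.single k 1)) hq
  simp [hk.1.symm, hk.2.symm, hkl.symm] at this

theorem X_sub_X_dvd_X_sub_X [Nontrivial R] {i j k l : σ} (hkl : k ≠ l)
    (h : (X i - X j : MvPolynomial σ R) ∣ X k - X l) :
    (k = i ∧ l = j) ∨ (k = j ∧ l = i) := by
  have hl := mem_of_X_sub_X_dvd_X_sub_X (i := i) (j := j) hkl.symm
    (by simpa using h.neg_right)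
  have hk := mem_of_X_sub_X_dvd_X_sub_X hkl h
  grind

end XSubX

section Alternating

variable [Fintype σ] [DecidableEq σ]

def IsAlternating (p : MvPolynomial σ R) : Prop :=
  ∀ e : Perm σ, rename e p = Perm.sign e • p

theorem IsAlternating.X_sub_X_dvd [IsDomain R] [CharZero R] {p : MvPolynomial σ R}
    (hp : IsAlternating p) {i j : σ} (hij : i ≠ j) : X i - X j ∣ p := by
  have hfix : Function.update id i j ∘ swap i j = Function.update (id : σ → σ) i j := by
    ext k
    simp only [Function.comp_apply, Function.update_apply, swap_apply_def, id]
    split_ifs <;> simp_all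
  have hneg : rename (Function.update id i j) p = -rename (Function.update id i j) p := by
    conv_lhs => rw [← hfix, ← rename_rename, hp, Perm.sign_swap hij]
    simp
  rw [X_sub_X_dvd_iff_rename_update_eq_zero]
  exact self_eq_neg.mp hneg

end Alternating

section Vandermonde

variable (R) (n : ℕ)

noncomputable def vandermonde : MvPolynomial (Fin n) R :=
  ∏ q ∈ Finset.univ.filter (fun q : Fin n × Fin n => q.1 < q.2), (X q.1 - X q.2)

variable {n R}

theorem vandermonde_eq_neg_one_pow_mul_det :
    vandermonde R n = (-1) ^ (Finset.univ.filter (fun q : Fin n × Fin n => q.1 < q.2)).card *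
      (Matrix.vandermonde (X : Fin n → MvPolynomial (Fin n) R)).det := by
  have hpairs : ∏ i, ∏ j ∈ Finset.Ioi i, (X j - X i : MvPolynomial (Fin n) R) =
      ∏ q ∈ Finset.univ.filter (fun q : Fin n × Fin n => q.1 < q.2), (X q.2 - X q.1) := by
    rw [Finset.prod_sigma']
    refine Finset.prod_nbij' (fun q => (q.1, q.2)) (fun q => ⟨q.1, q.2⟩) ?_ ?_ ?_ ?_ ?_ <;> simp
  rw [Matrix.det_vandermonde, hpairs, ← Finset.prod_const, vandermonde,
    ← Finset.prod_mul_distrib]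
  exact Finset.prod_congr rfl fun _ _ => by ring

theorem isAlternating_vandermonde : IsAlternating (vandermonde R n) := by
  intro e
  have hV : (rename e).mapMatrix (Matrix.vandermonde (X : Fin n → MvPolynomial (Fin n) R)) =
      (Matrix.vandermonde X).submatrix e id := by
    ext
    simp [Matrix.vandermonde]
  rw [vandermonde_eq_neg_one_pow_mul_det, map_mul, AlgHom.map_det, hV, Matrix.det_permute,
    Units.smul_def, zsmul_eq_mul]
  simp only [map_pow, map_neg, map_one]
  ring

theorem vandermonde_ne_zero [IsDomain R] : vandermonde R n ≠ 0 :=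
  Finset.prod_ne_zero_iff.mpr fun _ hq =>
    (prime_X_sub_X (Finset.mem_filter.mp hq).2.ne).ne_zero

variable [IsDomain R] [CharZero R] [UniqueFactorizationMonoid R]

theorem IsAlternating.vandermonde_dvd {p : MvPolynomial (Fin n) R} (hp : IsAlternating p) :
    vandermonde R n ∣ p := by
  refine Finset.prod_dvd_of_isRelPrime (fun q hq q' hq' hne => ?_)
    fun q hq => hp.X_sub_X_dvd (Finset.mem_filter.mp hq).2.ne
  have hlt : q.1 < q.2 := (Finset.mem_filter.mp hq).2
  have hlt' : q'.1 < q'.2 := (Finset.mem_filter.mp hq').2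
  refine (prime_X_sub_X hlt.ne).irreducible.isRelPrime_iff_not_dvd.mpr fun hdvd => ?_
  rcases X_sub_X_dvd_X_sub_X hlt'.ne hdvd with ⟨h1, h2⟩ | ⟨h1, h2⟩
  · exact hne (Prod.ext h1.symm h2.symm)
  · exact lt_asymm hlt (h1 ▸ h2 ▸ hlt')

theorem IsAlternating.exists_eq_vandermonde_mul {p : MvPolynomial (Fin n) R}
    (hp : IsAlternating p) :
    ∃ t : MvPolynomial (Fin n) R, t.IsSymmetric ∧ p = vandermonde R n * t := by
  obtain ⟨t, rfl⟩ := hp.vandermonde_dvd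
  refine ⟨t, fun e => mul_left_cancel₀ vandermonde_ne_zero ?_, rfl⟩
  have he := hp e
  rwa [map_mul, isAlternating_vandermonde e, smul_mul_assoc, smul_left_cancel_iff] at he

end Vandermonde

section AlternatingGroupInvariant

variable [Fintype σ] [DecidableEq σ] {p : MvPolynomial σ R}

theorem rename_eq_rename_of_sign_eq (hp : ∀ e ∈ alternatingGroup σ, rename e p = p)
    {e e' : Perm σ} (h : Perm.sign e = Perm.sign e') : rename e p = rename e' p := by
  have heven : e'⁻¹ * e ∈ alternatingGroup σ := by
    rw [Perm.mem_alternatingGroup, map_mul, map_inv, h, inv_mul_cancel]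
  calc rename e p = rename (e' * (e'⁻¹ * e)) p := by rw [mul_inv_cancel_left]
    _ = rename e' (rename (e'⁻¹ * e) p) := by rw [rename_rename, Perm.coe_mul]
    _ = rename e' p := by rw [hp _ heven]

theorem isSymmetric_add_rename_swap (hp : ∀ e ∈ alternatingGroup σ, rename e p = p)
    {i j : σ} (hij : i ≠ j) : (p + rename (swap i j) p).IsSymmetric := by
  intro e
  set τ := swap i j
  have hτ : Perm.sign τ = -1 := Perm.sign_swap hij
  rw [map_add, rename_rename, ← Perm.coe_mul]
  rcases Int.units_eq_one_or (Perm.sign e) with he | he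
  · rw [hp e (Perm.mem_alternatingGroup.mpr he),
      rename_eq_rename_of_sign_eq hp (e := e * τ) (e' := τ) (by simp [he])]
  · rw [rename_eq_rename_of_sign_eq hp (e' := τ) (he.trans hτ.symm),
      rename_eq_rename_of_sign_eq hp (e := e * τ) (e' := 1) (by simp [he, hτ]),
      Perm.coe_one, rename_id_apply, add_comm]

theorem isAlternating_sub_rename_swap (hp : ∀ e ∈ alternatingGroup σ, rename e p = p)
    {i j : σ} (hij : i ≠ j) : IsAlternating (p - rename (swap i j) p) := by
  intro e
  set τ := swap i j
  have hτ : Perm.sign τ = -1 := Perm.sign_swap hij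
  rw [map_sub, rename_rename, ← Perm.coe_mul]
  rcases Int.units_eq_one_or (Perm.sign e) with he | he
  · rw [he, one_smul, hp e (Perm.mem_alternatingGroup.mpr he),
      rename_eq_rename_of_sign_eq hp (e := e * τ) (e' := τ) (by simp [he])]
  · rw [he, Units.neg_smul, one_smul, neg_sub,
      rename_eq_rename_of_sign_eq hp (e' := τ) (he.trans hτ.symm),
      rename_eq_rename_of_sign_eq hp (e := e * τ) (e' := 1) (by simp [he, hτ]),
      Perm.coe_one, rename_id_apply]

end AlternatingGroupInvariant

theorem symmetricSubalgebra_eq_adjoin_esymm [Fintype σ] :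
    symmetricSubalgebra σ R =
      Algebra.adjoin R ((fun k => esymm σ R k) '' Set.Icc 1 (Fintype.card σ)) := by
  refine le_antisymm (fun p hp => ?_) (Algebra.adjoin_le ?_)
  · obtain ⟨q, hq⟩ := esymmAlgHom_surjective R le_rfl ⟨p, hp⟩
    have hrange : p ∈ Algebra.adjoin R
        (Set.range fun i : Fin (Fintype.card σ) => esymm σ R (i + 1)) := by
      rw [Algebra.adjoin_range_eq_range_aeval]
      have hq' := congrArg Subtype.val hq
      rw [esymmAlgHom_apply] at hq'
      exact ⟨q, hq'⟩
    refine Algebra.adjoin_mono ?_ hrange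
    rintro _ ⟨i, rfl⟩
    exact ⟨i + 1, ⟨Nat.le_add_left 1 i, i.isLt⟩, rfl⟩
  · rintro _ ⟨k, -, rfl⟩
    exact esymm_isSymmetric σ R k

end MvPolynomial

/-- Over a field of characteristic zero, the `Aₙ`-invariant polynomials in
`F[x₁, …, xₙ]` form exactly the `F`-subalgebra generated by the elementary symmetric
polynomials `e₁, …, eₙ` together with the Vandermonde polynomial `∏_{i<j} (xᵢ − xⱼ)`. -/
theorem alternating_invariants_eq_adjoin (F : Type) [Field F] [CharZero F]
    (n : ℕ) (hn : 2 ≤ n) :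
    {p : MvPolynomial (Fin n) F |
        ∀ σ : Equiv.Perm (Fin n), σ ∈ alternatingGroup (Fin n) → rename (⇑σ) p = p} =
      ↑(Algebra.adjoin F
        ((fun k => esymm (Fin n) F k) '' (Set.Icc 1 n) ∪
          {∏ q ∈ Finset.univ.filter (fun q : Fin n × Fin n => q.1 < q.2),
            (X q.1 - X q.2)})) := by
  set A := Algebra.adjoin F ((fun k => esymm (Fin n) F k) '' Set.Icc 1 n ∪ {vandermonde F n})
  show _ = (A : Set (MvPolynomial (Fin n) F))
  have hsymm : symmetricSubalgebra (Fin n) F ≤ A := by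
    rw [symmetricSubalgebra_eq_adjoin_esymm, Fintype.card_fin]
    exact Algebra.adjoin_mono Set.subset_union_left
  have hΔ : vandermonde F n ∈ A := Algebra.subset_adjoin (Set.mem_union_right _ rfl)
  ext p
  refine ⟨fun hp => ?_, fun hp e he => ?_⟩
  · obtain ⟨i, j, hij⟩ := (Fin.nontrivial_iff_two_le.mpr hn).exists_pair_ne
    obtain ⟨t, ht, hpt⟩ := (isAlternating_sub_rename_swap hp hij).exists_eq_vandermonde_mul
    have hp2 : p = (2⁻¹ : F) • ((p + rename (swap i j) p) + (p - rename (swap i j) p)) := by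
      rw [add_add_sub_cancel, ← two_smul F p, smul_smul, inv_mul_cancel₀ two_ne_zero, one_smul]
    rw [hp2, hpt]
    exact A.smul_mem (A.add_mem (hsymm (isSymmetric_add_rename_swap hp hij))
      (A.mul_mem hΔ (hsymm ht))) _
  · refine Algebra.adjoin_le (S := AlgHom.equalizer (rename e) (AlgHom.id F _)) ?_ hp
    rintro _ (⟨k, -, rfl⟩ | rfl)
    · exact esymm_isSymmetric (Fin n) F k e
    · rw [SetLike.mem_coe, AlgHom.mem_equalizer, isAlternating_vandermonde e,
        Perm.mem_alternatingGroup.mp he, one_smul, AlgHom.id_apply]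
end

section
/- Let m ≥ 2 be an even integer. The set W ⊆ ℂ^m of tuples (b_1, …, b_m) such that the monic polynomial x^m + b_1 x^(m−1) + ⋯ + b_m is the square of a polynomial in ℂ[x] is a Zariski-closed subset of ℂ^m (i.e., W is the common zero locus of an ideal of polynomials in ℂ[b_1, …, b_m]), and the Krull dimension of the quotient ring ℂ[b_1, …, b_m]/I(W), where I(W) is the ideal of all polynomials vanishing on W, equals m/2. -/
/-!
Write `m = 2n`. A monic polynomial of degree `2n` that is a square is the square of a monic
`q = x^n + c₀ x^(n-1) + ⋯ + c_{n-1}`, so `W` is the image of the polynomial map `ℂⁿ → ℂ²ⁿ`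
sending `c` to the coefficients of `q²`. The coefficient of `x^(2n-1-j)` in `q²` is `2 c_j` plus
a polynomial in `c₀, …, c_{j-1}`, so the comorphism `ℂ[b] → ℂ[c]` is surjective. Hence the map
is a closed embedding: `W` is the zero locus of its kernel, `I(W)` is that kernel, and
`ℂ[b]/I(W) ≅ ℂ[c]` has Krull dimension `n`.
-/

/-- The ideal of all polynomials vanishing on a subset `W ⊆ ℂ^m`. -/
noncomputable def vanishingIdeal {m : ℕ} (W : Set (Fin m → ℂ)) :
    Ideal (MvPolynomial (Fin m) ℂ) where
  carrier := {p | ∀ x ∈ W, MvPolynomial.eval x p = 0}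
  add_mem' := by
    intro a b ha hb x hx
    simp [ha x hx, hb x hx]
  zero_mem' := by
    intro x hx
    simp
  smul_mem' := by
    intro c p hp x hx
    simp [smul_eq_mul, hp x hx]

namespace Polynomial

variable {R : Type*} [CommRing R]

noncomputable def monicWithCoeffs (m : ℕ) (b : Fin m → R) : R[X] :=
  X ^ m + ∑ i : Fin m, C (b i) * X ^ (m - ((i : ℕ) + 1))

theorem coeff_sum_C_mul_X_pow_sub (m : ℕ) (b : Fin m → R) (t : ℕ) :
    (∑ i : Fin m, C (b i) * X ^ (m - ((i : ℕ) + 1))).coeff t =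
      if h : t < m then b ⟨m - 1 - t, by omega⟩ else 0 := by
  simp only [finsetSum_coeff, coeff_C_mul_X_pow]
  split_ifs with ht
  · rw [Finset.sum_eq_single ⟨m - 1 - t, by omega⟩ (fun i _ hi => if_neg fun h => hi
      (Fin.ext (by simp; omega))) (by simp), if_pos (by simp; omega)]
  · exact Finset.sum_eq_zero fun i _ => if_neg (by omega)

theorem coeff_monicWithCoeffs (m : ℕ) (b : Fin m → R) (t : ℕ) :
    (monicWithCoeffs m b).coeff t =
      if h : t < m then b ⟨m - 1 - t, by omega⟩ else if t = m then 1 else 0 := by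
  rw [monicWithCoeffs, coeff_add, coeff_sum_C_mul_X_pow_sub, coeff_X_pow]
  split_ifs <;> first | omega | simp

theorem coeff_monicWithCoeffs_sub_one_sub (m : ℕ) (b : Fin m → R) (i : Fin m) :
    (monicWithCoeffs m b).coeff (m - 1 - i) = b i := by
  rw [coeff_monicWithCoeffs, dif_pos (by omega)]
  congr
  omega

theorem monicWithCoeffs_monic (m : ℕ) (b : Fin m → R) : (monicWithCoeffs m b).Monic :=
  monic_of_natDegree_le_of_coeff_eq_one m
    (natDegree_le_iff_coeff_eq_zero.mpr fun t ht => by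
      rw [coeff_monicWithCoeffs, dif_neg (by omega), if_neg (by omega)])
    (by simp [coeff_monicWithCoeffs])

theorem natDegree_monicWithCoeffs [Nontrivial R] (m : ℕ) (b : Fin m → R) :
    (monicWithCoeffs m b).natDegree = m :=
  natDegree_eq_of_le_of_coeff_ne_zero
    (natDegree_le_iff_coeff_eq_zero.mpr fun t ht => by
      rw [coeff_monicWithCoeffs, dif_neg (by omega), if_neg (by omega)])
    (by simp [coeff_monicWithCoeffs])

theorem monicWithCoeffs_injective (m : ℕ) : Function.Injective (monicWithCoeffs (R := R) m) :=
  fun b b' h => _root_.funext fun i => by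
    rw [← coeff_monicWithCoeffs_sub_one_sub m b, h, coeff_monicWithCoeffs_sub_one_sub]

theorem Monic.eq_monicWithCoeffs {p : R[X]} (hp : p.Monic) {m : ℕ} (hdeg : p.natDegree = m) :
    p = monicWithCoeffs m (fun i => p.coeff (m - 1 - i)) := by
  ext t
  rw [coeff_monicWithCoeffs]
  split_ifs with hlt heq
  · congr 1; dsimp only; omega
  · rw [heq, ← hdeg, hp.coeff_natDegree]
  · exact coeff_eq_zero_of_natDegree_lt (by omega)

theorem map_monicWithCoeffs {S : Type*} [CommRing S] (f : R →+* S) (m : ℕ) (b : Fin m → R) :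
    (monicWithCoeffs m b).map f = monicWithCoeffs m (f ∘ b) := by
  simp [monicWithCoeffs, Polynomial.map_sum]

theorem exists_monic_sq_eq_of_monic_sq [IsDomain R] {q : R[X]} (h : (q ^ 2).Monic) :
    ∃ r : R[X], r.Monic ∧ r ^ 2 = q ^ 2 := by
  have hu : q.leadingCoeff * q.leadingCoeff = 1 := by
    rw [← sq, ← leadingCoeff_pow, h.leadingCoeff]
  refine ⟨C q.leadingCoeff * q, monic_C_mul_of_mul_leadingCoeff_eq_one hu, ?_⟩
  rw [mul_pow, ← C_pow, sq q.leadingCoeff, hu, C_1, one_mul]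

end Polynomial

namespace MvPolynomial

variable {R : Type*} [CommRing R] {σ τ : Type*}

noncomputable def polynomialMap (S : σ → MvPolynomial τ R) (c : τ → R) : σ → R :=
  fun s => eval c (S s)

theorem eval_aeval (S : σ → MvPolynomial τ R) (c : τ → R) (p : MvPolynomial σ R) :
    eval c (aeval S p) = eval (polynomialMap S c) p := by
  induction p using MvPolynomial.induction_on <;> simp_all [polynomialMap]

theorem aeval_surjective_of_triangular [Preorder τ] [WellFoundedLT τ]
    (S : σ → MvPolynomial τ R)
    (h : ∀ i, ∃ s, ∃ c : R, IsUnit c ∧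
      S s - C c * X i ∈ Algebra.adjoin R (X '' Set.Iio i)) :
    Function.Surjective (aeval (R := R) S) := by
  rw [← AlgHom.range_eq_top, eq_top_iff, ← adjoin_range_X, Algebra.adjoin_le_iff]
  rintro _ ⟨i, rfl⟩
  induction i using WellFoundedLT.induction with
  | _ i ih =>
  obtain ⟨s, c, ⟨u, rfl⟩, hmem⟩ := h i
  have hlower : Algebra.adjoin R (X '' Set.Iio i) ≤ (aeval (R := R) S).range :=
    Algebra.adjoin_le (by rintro _ ⟨j, hj, rfl⟩; exact ih j hj)
  have hCX : C (u : R) * X i ∈ (aeval (R := R) S).range := by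
    simpa using sub_mem (⟨X s, aeval_X S s⟩ : S s ∈ (aeval (R := R) S).range) (hlower hmem)
  simpa [← mul_assoc, ← C_mul] using
    mul_mem (Subalgebra.algebraMap_mem (aeval (R := R) S).range (↑u⁻¹ : R)) hCX

theorem range_polynomialMap_eq_zeroLocus_ker {S : σ → MvPolynomial τ R}
    (hS : Function.Surjective (aeval (R := R) S)) :
    Set.range (polynomialMap S) = {x | ∀ p ∈ RingHom.ker (aeval S), eval x p = 0} := by
  refine Set.Subset.antisymm ?_ fun x hx => ?_
  · rintro _ ⟨c, rfl⟩ p hp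
    rw [← eval_aeval, RingHom.mem_ker.mp hp, map_zero]
  choose T hT using fun k => hS (X k)
  have hST (q : MvPolynomial τ R) : aeval S (aeval T q) = q := by
    rw [← AlgHom.comp_apply, comp_aeval]
    simp only [hT, aeval_X_left_apply]
  refine ⟨polynomialMap T x, _root_.funext fun s => ?_⟩
  have hker : X s - aeval T (S s) ∈ RingHom.ker (aeval S) := by
    rw [RingHom.mem_ker, map_sub, aeval_X, hST, sub_self]
  have := hx _ hker
  rw [map_sub, eval_X, sub_eq_zero, eval_aeval] at this
  exact this.symm

end MvPolynomial

section SquareLocus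

open Polynomial
open MvPolynomial (polynomialMap)

variable (R : Type*) [CommRing R]

/-- The coefficient of `x^(2n-1-j)` in `(x^n + X₀ x^(n-1) + ⋯ + X_{n-1})²`. -/
noncomputable def sqGenericMonicCoeff (n : ℕ) (j : Fin (2 * n)) : MvPolynomial (Fin n) R :=
  ((monicWithCoeffs n MvPolynomial.X) ^ 2).coeff (2 * n - 1 - j)

variable {R}

theorem monicWithCoeffs_polynomialMap_sqGenericMonicCoeff [Nontrivial R] (n : ℕ)
    (c : Fin n → R) :
    monicWithCoeffs (2 * n) (polynomialMap (sqGenericMonicCoeff R n) c) =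
      monicWithCoeffs n c ^ 2 := by
  have hmap :
      (monicWithCoeffs n MvPolynomial.X).map (MvPolynomial.eval c) = monicWithCoeffs n c := by
    rw [map_monicWithCoeffs]
    congr
    ext
    simp
  have hdeg : (monicWithCoeffs n c ^ 2).natDegree = 2 * n := by
    rw [(monicWithCoeffs_monic n c).natDegree_pow, natDegree_monicWithCoeffs]
  rw [((monicWithCoeffs_monic n c).pow 2).eq_monicWithCoeffs hdeg, ← hmap, ← Polynomial.map_pow]
  simp only [coeff_map]
  rfl

theorem setOf_monicWithCoeffs_eq_sq_eq_range [IsDomain R] (n : ℕ) :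
    {b : Fin (2 * n) → R | ∃ q, monicWithCoeffs (2 * n) b = q ^ 2} =
      Set.range (polynomialMap (sqGenericMonicCoeff R n)) := by
  ext b
  constructor
  · rintro ⟨q, hq⟩
    obtain ⟨r, hr, hrq⟩ := exists_monic_sq_eq_of_monic_sq (hq ▸ monicWithCoeffs_monic _ b)
    have hdeg : r.natDegree = n := by
      have := congrArg natDegree (hq.trans hrq.symm)
      rw [natDegree_monicWithCoeffs, hr.natDegree_pow] at this
      omega
    refine ⟨fun i => r.coeff (n - 1 - i), monicWithCoeffs_injective _ ?_⟩
    rw [monicWithCoeffs_polynomialMap_sqGenericMonicCoeff, ← hr.eq_monicWithCoeffs hdeg, hrq, hq]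
  · rintro ⟨c, rfl⟩
    exact ⟨_, monicWithCoeffs_polynomialMap_sqGenericMonicCoeff n c⟩

theorem sqGenericMonicCoeff_sub_two_mul_X_mem (n : ℕ) (i : Fin n) :
    sqGenericMonicCoeff R n ⟨i, by omega⟩ - 2 * MvPolynomial.X i ∈
      Algebra.adjoin R (MvPolynomial.X '' Set.Iio i) := by
  set L : (MvPolynomial (Fin n) R)[X] :=
    ∑ k : Fin n, C (MvPolynomial.X k) * X ^ (n - ((k : ℕ) + 1)) with hL
  have hsq : monicWithCoeffs n MvPolynomial.X ^ 2 =
      X ^ (2 * n) + 2 * (X ^ n * L) + L ^ 2 := by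
    rw [monicWithCoeffs]
    ring
  have hlinear : (2 * (X ^ n * L)).coeff (2 * n - 1 - i) = 2 * MvPolynomial.X i := by
    rw [coeff_ofNat_mul, coeff_X_pow_mul', if_pos (by omega), hL, coeff_sum_C_mul_X_pow_sub,
      dif_pos (by omega)]
    congr
    omega
  -- `L` has no terms of degree `≥ n`, so in degree `2n-1-i` of `L²` only coefficients of `L` in
  -- degrees `> n-1-i` occur, and these are the variables `X k` with `k < i`.
  have hquadratic : (L ^ 2).coeff (2 * n - 1 - i) ∈
      Algebra.adjoin R (MvPolynomial.X '' Set.Iio i) := by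
    rw [sq, coeff_mul]
    refine Subalgebra.sum_mem _ fun ⟨a, b⟩ hab => ?_
    rw [Finset.HasAntidiagonal.mem_antidiagonal] at hab
    simp only [hL, coeff_sum_C_mul_X_pow_sub]
    split_ifs with ha hb
    · exact Subalgebra.mul_mem _
        (Algebra.subset_adjoin ⟨_, by simp only [Set.mem_Iio, Fin.lt_def]; omega, rfl⟩)
        (Algebra.subset_adjoin ⟨_, by simp only [Set.mem_Iio, Fin.lt_def]; omega, rfl⟩)
    all_goals simp
  rw [sqGenericMonicCoeff, hsq, coeff_add, coeff_add, coeff_X_pow, if_neg (by simp; omega),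
    zero_add]
  simpa [hlinear] using hquadratic

theorem aeval_sqGenericMonicCoeff_surjective (h2 : IsUnit (2 : R)) (n : ℕ) :
    Function.Surjective (MvPolynomial.aeval (R := R) (sqGenericMonicCoeff R n)) :=
  MvPolynomial.aeval_surjective_of_triangular _ fun i =>
    ⟨_, 2, h2, by rw [map_ofNat]; exact sqGenericMonicCoeff_sub_two_mul_X_mem n i⟩

end SquareLocus

theorem vanishingIdeal_range_polynomialMap {m : ℕ} {τ : Type*}
    (S : Fin m → MvPolynomial τ ℂ) :
    vanishingIdeal (Set.range (MvPolynomial.polynomialMap S)) =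
      RingHom.ker (MvPolynomial.aeval S) := by
  ext p
  rw [RingHom.mem_ker, MvPolynomial.funext_iff]
  simp only [map_zero, MvPolynomial.eval_aeval]
  exact Set.forall_mem_range

theorem square_locus_closed_and_dim_eq_general (m : ℕ) (heven : Even m)
    (W : Set (Fin m → ℂ))
    (hW : W = {b : Fin m → ℂ | ∃ q : Polynomial ℂ,
      (Polynomial.X : Polynomial ℂ) ^ m +
        ∑ i : Fin m, Polynomial.C (b i) *
          (Polynomial.X : Polynomial ℂ) ^ (m - ((i : ℕ) + 1)) = q ^ 2}) :
    (∃ I : Ideal (MvPolynomial (Fin m) ℂ),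
      W = {x : Fin m → ℂ | ∀ p ∈ I, MvPolynomial.eval x p = 0}) ∧
    ringKrullDim (MvPolynomial (Fin m) ℂ ⧸ vanishingIdeal W) =
      ((m / 2 : ℕ) : WithBot (WithTop ℕ)) := by
  obtain ⟨n, rfl⟩ := even_iff_two_dvd.mp heven
  have hsurj := aeval_sqGenericMonicCoeff_surjective (Ne.isUnit (two_ne_zero' ℂ)) n
  obtain rfl : W = Set.range (MvPolynomial.polynomialMap (sqGenericMonicCoeff ℂ n)) :=
    hW.trans (setOf_monicWithCoeffs_eq_sq_eq_range n)
  refine ⟨⟨_, MvPolynomial.range_polynomialMap_eq_zeroLocus_ker hsurj⟩, ?_⟩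
  rw [vanishingIdeal_range_polynomialMap,
    ringKrullDim_eq_of_ringEquiv (Ideal.quotientKerAlgEquivOfSurjective hsurj).toRingEquiv,
    MvPolynomial.ringKrullDim_of_isNoetherianRing, ringKrullDim_eq_zero_of_field, zero_add,
    Nat.card_fin, Nat.mul_div_cancel_left n two_pos]
  rfl

/-- Let `m ≥ 2` be even.  The set `W ⊆ ℂ^m` of tuples `(b₁, …, b_m)` such that
`x^m + b₁ x^(m−1) + ⋯ + b_m` is the square of a polynomial is Zariski closed, and the
Krull dimension of `ℂ[b₁, …, b_m]/I(W)` equals `m/2`.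
(Here `b : Fin m → ℂ` encodes the tuple via `b i = b_{i+1}`.) -/
theorem square_locus_closed_and_dim_eq (m : ℕ) (hm : 2 ≤ m) (heven : Even m)
    (W : Set (Fin m → ℂ))
    (hW : W = {b : Fin m → ℂ | ∃ q : Polynomial ℂ,
      (Polynomial.X : Polynomial ℂ) ^ m +
        ∑ i : Fin m, Polynomial.C (b i) *
          (Polynomial.X : Polynomial ℂ) ^ (m - ((i : ℕ) + 1)) = q ^ 2}) :
    (∃ I : Ideal (MvPolynomial (Fin m) ℂ),
      W = {x : Fin m → ℂ | ∀ p ∈ I, MvPolynomial.eval x p = 0}) ∧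
    ringKrullDim (MvPolynomial (Fin m) ℂ ⧸ vanishingIdeal W) =
      ((m / 2 : ℕ) : WithBot (WithTop ℕ)) :=
  square_locus_closed_and_dim_eq_general m heven W hW
end

section
/- Let f ∈ ℂ[z] be a polynomial of degree d ≥ 1 and let S ⊆ ℂ be a set containing all critical values of f. Then the restriction of the map z ↦ f(z) to a map from {z ∈ ℂ : f(z) ∉ S} to ℂ ∖ S is a covering map. -/
/-!
Polynomial evaluation `ℂ → ℂ` is a closed map, since `‖f z‖ → ∞` as `z → ∞` (constants are
trivially closed). Over a value `w ∉ S` the derivative vanishes nowhere on the fibre, so the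
fibre is finite (otherwise `f = C w` and `f' = 0`) and, by the inverse function theorem, `f` is a
local homeomorphism near each of its points. A closed map with finite fibres that is a local
homeomorphism near every fibre point is a covering map over those values.
-/

open Polynomial

theorem Polynomial.finite_preimage_eval_singleton_of_derivative_ne_zero {R : Type*} [CommRing R]
    [IsDomain R] (f : R[X]) (w : R) (h : ∀ z, f.eval z = w → f.derivative.eval z ≠ 0) :
    (f.eval ⁻¹' {w}).Finite := by
  by_contra hinf
  obtain ⟨z, hz⟩ := Set.Infinite.nonempty hinf
  have hf : f = C w := f.eq_of_infinite_eval_eq (C w) (by simp only [eval_C]; exact hinf)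
  exact h z hz (by simp [hf])

theorem isLocalHomeomorphOn_of_hasStrictDerivAt {𝕜 : Type*} [NontriviallyNormedField 𝕜]
    [CompleteSpace 𝕜] {f f' : 𝕜 → 𝕜} {s : Set 𝕜} (hf : ∀ x ∈ s, HasStrictDerivAt f (f' x) x)
    (hf' : ∀ x ∈ s, f' x ≠ 0) : IsLocalHomeomorphOn f s :=
  .mk f s fun x hx =>
    ⟨((hf x hx).hasStrictFDerivAt_equiv (hf' x hx)).toOpenPartialHomeomorph f,
      HasStrictFDerivAt.mem_toOpenPartialHomeomorph_source _, fun _ _ => rfl⟩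

theorem polynomial_restriction_isCoveringMap_general (f : ℂ[X]) (S : Set ℂ)
    (hS : ∀ c : ℂ, (∃ z : ℂ, (Polynomial.derivative f).eval z = 0 ∧ f.eval z = c) → c ∈ S) :
    IsCoveringMap (fun z : {z : ℂ // f.eval z ∉ S} =>
      (⟨f.eval z.1, z.2⟩ : {w : ℂ // w ∉ S})) := by
  have hregular : ∀ z, f.eval z ∉ S → f.derivative.eval z ≠ 0 :=
    fun z hz h0 => hz (hS _ ⟨z, h0, rfl⟩)
  have hcover : IsCoveringMapOn f.eval Sᶜ :=
    f.isClosedMap_eval.isCoveringMapOn_of_isLocalHomeomorphOn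
      (fun w hw => f.finite_preimage_eval_singleton_of_derivative_ne_zero w
        fun z hz => hregular z (hz ▸ hw))
      (isLocalHomeomorphOn_of_hasStrictDerivAt (fun z _ => f.hasStrictDerivAt z) hregular)
  exact hcover.isCoveringMap_restrictPreimage

/-- Let `f ∈ ℂ[z]` be a polynomial of degree `d ≥ 1` and let `S ⊆ ℂ` contain all
critical values of `f`.  Then `z ↦ f(z)`, restricted to a map
`{z : f(z) ∉ S} → ℂ ∖ S`, is a (topological) covering map. -/
theorem polynomial_restriction_isCoveringMap (f : ℂ[X]) (d : ℕ) (hd : 1 ≤ d)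
    (hdeg : f.natDegree = d) (S : Set ℂ)
    (hS : ∀ c : ℂ, (∃ z : ℂ, (Polynomial.derivative f).eval z = 0 ∧ f.eval z = c) → c ∈ S) :
    IsCoveringMap (fun z : {z : ℂ // f.eval z ∉ S} =>
      (⟨f.eval z.1, z.2⟩ : {w : ℂ // w ∉ S})) :=
  polynomial_restriction_isCoveringMap_general f S hS
end

section
/- Let n ≥ 2 be an even integer and let s_2, …, s_{n−1} ∈ ℂ be arbitrary. Then the polynomial p(s) = disc_t(t^n + s_2 t^(n−2) + ⋯ + s_{n−1} t + s) ∈ ℂ[s] has degree exactly n − 1 in s, and the polynomial D² − p(s) is irreducible in ℂ[s, D]; in other words, the plane curve D² = disc_t(t^n + s_2 t^(n−2) + ⋯ + s_{n−1} t + s) is geometrically irreducible. -/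
/-- The Sylvester matrix of two polynomials `f` and `g`, regarded as having degrees
`m` and `n` respectively. -/
def sylvester {R : Type*} [CommRing R] (f g : Polynomial R) (m n : ℕ) :
    Matrix (Fin (n + m)) (Fin (n + m)) R :=
  Matrix.of fun i j =>
    if (i : ℕ) < n then
      (if (i : ℕ) ≤ (j : ℕ) ∧ (j : ℕ) ≤ (i : ℕ) + m then f.coeff (m + i - j) else 0)
    else
      (if (i : ℕ) - n ≤ (j : ℕ) ∧ (j : ℕ) ≤ ((i : ℕ) - n) + n then
        g.coeff (n + ((i : ℕ) - n) - j) else 0)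

/-- The resultant `Res(f, g)`: the determinant of the Sylvester matrix of `f` and `g`. -/
noncomputable def resultant {R : Type*} [CommRing R] (f g : Polynomial R) : R :=
  (sylvester f g f.natDegree g.natDegree).det

/-- The discriminant `disc f = (−1)^(m(m−1)/2) · Res(f, f′)` of a polynomial `f` of
degree `m`. -/
noncomputable def polyDisc {R : Type*} [CommRing R] (f : Polynomial R) : R :=
  (-1) ^ (f.natDegree * (f.natDegree - 1) / 2) * resultant f (Polynomial.derivative f)

/-!
Write the polynomial as `F = g(t) + s` with `g ∈ ℂ[t]`. Its `t`-derivative `g'` does not involve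
`s` and splits over `ℂ`, so the product formula for the resultant gives
`disc F = ± Res(g', g + s) = ± lc(g')ⁿ ∏_{g'(β) = 0} (s + g(β))`, a polynomial of degree
`deg g' = n - 1` in `s`. For even `n` this degree is odd, so `disc F` is not a square in `ℂ[s]`,
and a monic quadratic over a domain without a root is irreducible.
-/

open Polynomial

theorem Polynomial.sylvester_apply {R : Type*} [Semiring R] (f g : R[X]) (m n : ℕ)
    (i j : Fin (m + n)) :
    Polynomial.sylvester f g m n i j =
      if (j : ℕ) < m then (if (j : ℕ) ≤ i ∧ (i : ℕ) ≤ j + n then g.coeff (i - j) else 0)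
      else (if (j : ℕ) - m ≤ i ∧ (i : ℕ) ≤ j - m + m then f.coeff (i - (j - m)) else 0) := by
  induction j using Fin.addCases with
  | left j => simp [Polynomial.sylvester]
  | right j => simp [Polynomial.sylvester]

theorem sylvester_eq_submatrix_transpose {R : Type*} [CommRing R] (f g : R[X]) (m n : ℕ) :
    _root_.sylvester f g m n = (Polynomial.sylvester f g m n).transpose.submatrix
      (Fin.revPerm.trans (finCongr (Nat.add_comm n m)))
      (Fin.revPerm.trans (finCongr (Nat.add_comm n m))) := by
  ext ⟨i, hi⟩ ⟨j, hj⟩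
  simp only [_root_.sylvester, Polynomial.sylvester_apply, Matrix.of_apply,
    Matrix.submatrix_apply, Matrix.transpose_apply, Equiv.trans_apply, Fin.revPerm_apply,
    finCongr_apply, Fin.val_rev, Fin.val_cast]
  split_ifs <;> first | omega | rfl | (congr 1; omega)

theorem resultant_eq_polynomial_resultant {R : Type*} [CommRing R] (f g : R[X]) :
    _root_.resultant f g = Polynomial.resultant f g := by
  rw [_root_.resultant, Polynomial.resultant, sylvester_eq_submatrix_transpose,
    Matrix.det_submatrix_equiv_self, Matrix.det_transpose]

theorem Polynomial.degree_neg_one_pow_mul {R : Type*} [Ring R] (k : ℕ) (p : R[X]) :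
    ((-1) ^ k * p).degree = p.degree := by
  rcases neg_one_pow_eq_or R[X] k with h | h <;> simp [h]

theorem Polynomial.degree_multiset_prod_X_add_C {R ι : Type*} [CommRing R] [Nontrivial R]
    (s : Multiset ι) (c : ι → R) :
    (s.map fun i => X + C (c i)).prod.degree = (Multiset.card s : WithBot ℕ) := by
  have hmonic : (s.map fun i => X + C (c i)).prod.Monic :=
    monic_multiset_prod_of_monic _ _ fun i _ => monic_X_add_C (c i)
  rw [degree_eq_natDegree hmonic.ne_zero]
  simpa [Multiset.map_map, Function.comp_def] using
    natDegree_multiset_prod_X_sub_C_eq_card (s.map fun i => -c i)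

theorem Polynomial.not_isSquare_of_odd_natDegree {R : Type*} [Semiring R] [NoZeroDivisors R]
    {p : R[X]} (hp : Odd p.natDegree) : ¬IsSquare p := by
  rintro ⟨q, rfl⟩
  rcases eq_or_ne q 0 with rfl | hq
  · simp at hp
  · rw [natDegree_mul hq hq, ← two_mul] at hp
    exact Nat.not_odd_iff_even.mpr (even_two_mul _) hp

section

variable {R : Type*} [CommRing R] [IsDomain R]

theorem Polynomial.irreducible_X_sq_sub_C {r : R} (hr : ¬IsSquare r) :
    Irreducible (X ^ 2 - C r) := by
  have hdeg : (X ^ 2 - C r).natDegree = 2 := natDegree_X_pow_sub_C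
  rw [(monic_X_pow_sub_C r two_ne_zero).irreducible_iff_roots_eq_zero_of_degree_le_three
    (by omega) (by omega)]
  exact nthRoots_two_eq_zero_iff.mpr hr

theorem resultant_map_derivative_map_add_C_X (g : R[X]) (hg : (derivative g).Splits) :
    Polynomial.resultant ((derivative g).map C) (g.map C + C X) =
      C ((derivative g).leadingCoeff ^ (g.map C + C X).natDegree) *
        ((derivative g).roots.map fun β => X + C (g.eval β)).prod := by
  rw [resultant_eq_prod_eval _ _ _ le_rfl (hg.map C), leadingCoeff_map_of_injective C_injective,
    hg.roots_map_of_injective C_injective, Multiset.map_map]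
  simp [eval_map, add_comm]

theorem degree_resultant_map_add_C_X (g : R[X]) (hg : (derivative g).Splits)
    (hg0 : derivative g ≠ 0) :
    (Polynomial.resultant (g.map C + C X) (derivative (g.map C + C X))).degree =
      ((derivative g).natDegree : WithBot ℕ) := by
  have hderiv : derivative (g.map C + C X) = (derivative g).map C := by simp [derivative_map]
  rw [hderiv, resultant_comm, degree_neg_one_pow_mul, resultant_map_derivative_map_add_C_X g hg,
    degree_C_mul (pow_ne_zero _ (leadingCoeff_ne_zero.mpr hg0)), degree_multiset_prod_X_add_C,
    hg.natDegree_eq_card_roots]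

theorem degree_polyDisc_map_add_C_X (g : R[X]) (hg : (derivative g).Splits)
    (hg0 : derivative g ≠ 0) :
    (polyDisc (g.map C + C X)).degree = ((derivative g).natDegree : WithBot ℕ) := by
  rw [polyDisc, resultant_eq_polynomial_resultant, degree_neg_one_pow_mul,
    degree_resultant_map_add_C_X g hg hg0]

end

/-- Let `n ≥ 2` be even and `s₂, …, s_{n−1} ∈ ℂ` arbitrary.  Then
`p(s) = disc_t(tⁿ + s₂ tⁿ⁻² + ⋯ + s_{n−1} t + s) ∈ ℂ[s]` has degree exactly `n − 1`, and
`D² − p(s)` is irreducible in `ℂ[s][D]`; that is, the plane curve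
`D² = disc_t(tⁿ + s₂ tⁿ⁻² + ⋯ + s_{n−1} t + s)` is geometrically irreducible.
(Here `a : Fin (n−2) → ℂ` encodes the tuple via `a i = s_{i+2}`.) -/
theorem even_degree_fiber_irreducible (n : ℕ) (hn : 2 ≤ n) (heven : Even n)
    (a : Fin (n - 2) → ℂ) :
    (polyDisc
        ((Polynomial.X : Polynomial (Polynomial ℂ)) ^ n +
          ∑ i : Fin (n - 2),
            Polynomial.C (Polynomial.C (a i)) *
              (Polynomial.X : Polynomial (Polynomial ℂ)) ^ (n - ((i : ℕ) + 2)) +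
          Polynomial.C (Polynomial.X : Polynomial ℂ))).degree = ((n - 1 : ℕ) : WithBot ℕ) ∧
    Irreducible ((Polynomial.X : Polynomial (Polynomial ℂ)) ^ 2 -
      Polynomial.C (polyDisc
        ((Polynomial.X : Polynomial (Polynomial ℂ)) ^ n +
          ∑ i : Fin (n - 2),
            Polynomial.C (Polynomial.C (a i)) *
              (Polynomial.X : Polynomial (Polynomial ℂ)) ^ (n - ((i : ℕ) + 2)) +
          Polynomial.C (Polynomial.X : Polynomial ℂ)))) := by
  set g : ℂ[X] := X ^ n + ∑ i : Fin (n - 2), C (a i) * X ^ (n - ((i : ℕ) + 2))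
  have hF : (X : ℂ[X][X]) ^ n + ∑ i : Fin (n - 2), C (C (a i)) * X ^ (n - ((i : ℕ) + 2)) + C X =
      g.map C + C X := by
    simp [g, Polynomial.map_sum]
  have hlow : (∑ i : Fin (n - 2), C (a i) * X ^ (n - ((i : ℕ) + 2))).natDegree < n := by
    refine (natDegree_sum_le_of_forall_le (n := n - 2) _ _ fun i _ => ?_).trans_lt (by omega)
    exact (natDegree_C_mul_X_pow_le _ _).trans (by omega)
  have hg : g.natDegree = n := by
    rw [natDegree_add_eq_left_of_natDegree_lt (by rwa [natDegree_X_pow]), natDegree_X_pow]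
  have hdisc : (polyDisc (g.map C + C X)).degree = ((n - 1 : ℕ) : WithBot ℕ) := by
    rw [degree_polyDisc_map_add_C_X g (IsAlgClosed.splits _) (derivative_ne_zero.mpr (by omega)),
      natDegree_derivative, hg]
  have hodd : Odd (polyDisc (g.map C + C X)).natDegree := by
    obtain ⟨k, rfl⟩ := heven
    rw [natDegree_eq_of_degree_eq_some hdisc]
    exact ⟨k - 1, by omega⟩
  rw [hF]
  exact ⟨hdisc, irreducible_X_sq_sub_C (not_isSquare_of_odd_natDegree hodd)⟩
end
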